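/- (Theorem 2.2, first identity, q-case.) Let n ≥ 1 be a natural number, α₁, α₂ ∈ (0,1) and m₂ ∈ ℕ. Then the double series over all pairs (w₁,w₂) ∈ ℕ × ℕ of [w₂]_{m₂,q⁻¹} · g(w₁,w₂) converges, with sum equal to α₂^{m₂} · [n+m₂−1]_{m₂,q}. -/

import Mathlib

open Finset

/-- q-integer `[k]_q = (1 - q^k)/(1 - q)`. -/
noncomputable def qInt (q : ℝ) (k : ℤ) : ℝ := (1 - q ^ k) / (1 - q)

/-- q-factorial `[n]_q! = ∏_{i=1}^n [i]_q`. -/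
noncomputable def qFact (q : ℝ) (n : ℕ) : ℝ := ∏ i ∈ Finset.Icc 1 n, qInt q (i : ℤ)

/-- q-binomial coefficient `C_q(n,k)`. -/
noncomputable def qBinom (q : ℝ) (n k : ℕ) : ℝ := qFact q n / (qFact q k * qFact q (n - k))

/-- q-falling factorial `[u]_{m,q} = ∏_{i=1}^m [u-i+1]_q`. -/
noncomputable def qFall (q : ℝ) (u : ℤ) (m : ℕ) : ℝ := ∏ i ∈ Finset.Icc 1 m, qInt q (u - (i : ℤ) + 1)

/-- `[k]_{q⁻¹} = q^{1-k} · [k]_q`. -/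
noncomputable def qIntInv (q : ℝ) (k : ℤ) : ℝ := q ^ (1 - k) * qInt q k

/-- `[u]_{m,q⁻¹} = ∏_{i=1}^m [u-i+1]_{q⁻¹}`. -/
noncomputable def qFallInv (q : ℝ) (u : ℤ) (m : ℕ) : ℝ := ∏ i ∈ Finset.Icc 1 m, qIntInv q (u - (i : ℤ) + 1)

/-- `b(k) = k(k-1)/2`. -/
def bb (k : ℕ) : ℕ := k * (k - 1) / 2

/-- `⟨1 ⊕ α⟩_m = ∏_{i=1}^m (1 + α q^{i-1})`. -/
noncomputable def oplus (q α : ℝ) (m : ℕ) : ℝ := ∏ i ∈ Finset.Icc 1 m, (1 + α * q ^ (i - 1))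

/-- `⟨1 ⊖ β⟩_m = ∏_{i=1}^m (1 - β q^{i-1})`. -/
noncomputable def ominus (q β : ℝ) (m : ℕ) : ℝ := ∏ i ∈ Finset.Icc 1 m, (1 - β * q ^ (i - 1))

/-- q-trinomial coefficient `T_q(n; x₁, x₂)`. -/
noncomputable def qTri (q : ℝ) (n x1 x2 : ℕ) : ℝ :=
  qFact q n / (qFact q x1 * qFact q x2 * qFact q (n - x1 - x2))

/-- pmf of the negative q-trinomial distribution of the first kind. -/
noncomputable def gpmf (q a1 a2 : ℝ) (n w1 w2 : ℕ) : ℝ :=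
  (qFact q (n + w1 + w2 - 1) / (qFact q w1 * qFact q w2 * qFact q (n - 1))) *
    a1 ^ w1 * a2 ^ w2 * q ^ (bb w1 + bb w2) /
    (oplus q a1 (n + w1 + w2) * oplus q a2 (n + w2))

/-!
Write `n = k + 1` and `p M θ w = negQBinom q θ M w`, i.e.
`[M+w choose w]_q θ^w q^{b(w)} / ⟨1 ⊕ θ⟩_{M+w+1}`. Then `g(w₁, w₂) = p k α₂ w₂ · p (k + w₂) α₁ w₁`,
so summing over `w₁` first leaves the factorial moment `∑_w [w]_{m,q⁻¹} p k α₂ w`, once we know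
that every `p M θ` sums to `1`.

That goes by induction on `M`: by the q-Pascal rule, `a = p (M + 1) θ` satisfies
`a (w+1) (1 + r (w+1)) = p M θ (w+1) + r w · a w` with `r w = θ q^{M+1+w}`, so the partial sums of
`a` and of `p M θ` up to `N` differ by `r N · a N → 0`. For `M = 0` the indicator of `{0}` plays
the role of `p M θ`.

For the moment, `[w]_{m,q⁻¹}` vanishes for `w < m`, and
`[v+m]_{m,q⁻¹} q^{b(v+m)} = [v+m]_{m,q} q^{b(v)}` turns the term at `w = v + m` into
`α₂^m [k+m]_{m,q} · p (k + m) α₂ v`.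
-/

open Filter Topology

lemma bb_succ (k : ℕ) : bb (k + 1) = bb k + k := by
  simp only [bb, ← Nat.choose_two_right, Nat.choose_succ_succ, Nat.choose_one_right]
  ring

lemma qInt_natCast_add (q : ℝ) (a b : ℕ) :
    qInt q ((a + b : ℕ) : ℤ) = qInt q a + q ^ a * qInt q b := by
  simp only [qInt, zpow_natCast, pow_add]
  ring

lemma qFact_zero (q : ℝ) : qFact q 0 = 1 := rfl

lemma qFact_succ (q : ℝ) (n : ℕ) : qFact q (n + 1) = qFact q n * qInt q ((n + 1 : ℕ) : ℤ) :=
  Finset.prod_Icc_succ_top (by omega) _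

lemma hasSum_of_mul_one_add_eq {a b r : ℕ → ℝ} {s : ℝ} (ha : ∀ n, 0 ≤ a n)
    (hr : ∀ n, 0 ≤ r n) (hr0 : Tendsto r atTop (𝓝 0)) (hb : ∀ n, 0 ≤ b n)
    (hbs : HasSum b s) (h0 : a 0 * (1 + r 0) = b 0)
    (hsucc : ∀ n, a (n + 1) * (1 + r (n + 1)) = b (n + 1) + r n * a n) :
    HasSum a s := by
  have hpartial :
      ∀ N, ∑ i ∈ range (N + 1), a i + r N * a N = ∑ i ∈ range (N + 1), b i := by
    intro N
    induction N with
    | zero => simpa [mul_add, add_comm, mul_comm] using h0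
    | succ N ih =>
      rw [sum_range_succ, sum_range_succ b]
      linear_combination ih + hsucc N
  have ha_le : ∀ N, a N ≤ s := fun N =>
    calc a N ≤ ∑ i ∈ range (N + 1), a i :=
          single_le_sum (fun i _ => ha i) (self_mem_range_succ N)
      _ ≤ ∑ i ∈ range (N + 1), b i := by
          linarith [hpartial N, mul_nonneg (hr N) (ha N)]
      _ ≤ s := sum_le_hasSum _ (fun i _ => hb i) hbs
  have hra : Tendsto (fun N => r N * a N) atTop (𝓝 0) := by
    refine squeeze_zero (fun N => mul_nonneg (hr N) (ha N))
      (fun N => mul_le_mul_of_nonneg_left (ha_le N) (hr N)) ?_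
    simpa using hr0.mul_const s
  rw [hasSum_iff_tendsto_nat_of_nonneg ha, ← tendsto_add_atTop_iff_nat 1]
  have hbN := (hbs.tendsto_sum_nat).comp (tendsto_add_atTop_nat 1)
  simpa [← hpartial] using hbN.sub hra

section

variable {q : ℝ} (hq0 : 0 < q) (hq1 : q < 1)
include hq0 hq1

lemma qInt_pos {k : ℤ} (hk : 0 < k) : 0 < qInt q k :=
  div_pos (sub_pos.2 (zpow_lt_one₀ hq0 hq1 hk)) (sub_pos.2 hq1)

lemma qFact_pos (n : ℕ) : 0 < qFact q n :=
  prod_pos fun i hi => qInt_pos hq0 hq1 (by have := (mem_Icc.1 hi).1; omega)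

lemma qBinom_pos (n k : ℕ) : 0 < qBinom q n k :=
  div_pos (qFact_pos hq0 hq1 n) (mul_pos (qFact_pos hq0 hq1 k) (qFact_pos hq0 hq1 (n - k)))

lemma qBinom_self (n : ℕ) : qBinom q n n = 1 := by
  rw [qBinom, Nat.sub_self, qFact_zero, mul_one,
    div_self (qFact_pos hq0 hq1 n).ne']

lemma qBinom_zero_right (n : ℕ) : qBinom q n 0 = 1 := by
  rw [qBinom, Nat.sub_zero, qFact_zero, one_mul,
    div_self (qFact_pos hq0 hq1 n).ne']

lemma qBinom_pascal (l k : ℕ) :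
    qBinom q (l + k + 2) (k + 1) =
      q ^ (l + 1) * qBinom q (l + k + 1) k + qBinom q (l + k + 1) (k + 1) := by
  have hk := qInt_pos hq0 hq1 (k := ((k + 1 : ℕ) : ℤ)) (by omega)
  have hl := qInt_pos hq0 hq1 (k := ((l + 1 : ℕ) : ℤ)) (by omega)
  unfold qBinom
  rw [show l + k + 2 - (k + 1) = l + 1 by omega, show l + k + 1 - k = l + 1 by omega,
    show l + k + 1 - (k + 1) = l by omega, qFact_succ q (l + k + 1), qFact_succ q k, qFact_succ q l,
    show l + k + 1 + 1 = (l + 1) + (k + 1) by omega, qInt_natCast_add]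
  field_simp
  ring

end

noncomputable def negQBinom (q θ : ℝ) (M w : ℕ) : ℝ :=
  qBinom q (M + w) w * θ ^ w * q ^ bb w / oplus q θ (M + w + 1)

lemma oplus_succ (q θ : ℝ) (m : ℕ) : oplus q θ (m + 1) = oplus q θ m * (1 + θ * q ^ m) := by
  rw [oplus, prod_Icc_succ_top (by omega), ← oplus, Nat.add_sub_cancel]

lemma oplus_pos {q θ : ℝ} (hq : 0 ≤ q) (hθ : 0 ≤ θ) (m : ℕ) : 0 < oplus q θ m :=
  prod_pos fun _ _ => by positivity

section

variable {q θ : ℝ} (hq0 : 0 < q) (hq1 : q < 1) (hθ : 0 ≤ θ)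
include hq0 hq1 hθ

lemma negQBinom_nonneg (M w : ℕ) : 0 ≤ negQBinom q θ M w := by
  have := qBinom_pos hq0 hq1 (M + w) w
  have := oplus_pos hq0.le hθ (M + w + 1)
  unfold negQBinom
  positivity

omit hq1 in
lemma negQBinom_mul_one_add (M w : ℕ) :
    negQBinom q θ M w * (1 + θ * q ^ (M + w)) =
      qBinom q (M + w) w * θ ^ w * q ^ bb w / oplus q θ (M + w) := by
  have := oplus_pos hq0.le hθ (M + w)
  have : 0 < 1 + θ * q ^ (M + w) := by positivity
  rw [negQBinom, oplus_succ]
  field_simp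

lemma negQBinom_zero_zero_mul : negQBinom q θ 0 0 * (1 + θ) = 1 := by
  simpa [qBinom_self hq0 hq1, oplus, bb] using negQBinom_mul_one_add hq0 hθ 0 0

lemma negQBinom_zero_succ_mul (w : ℕ) :
    negQBinom q θ 0 (w + 1) * (1 + θ * q ^ (w + 1)) = θ * q ^ w * negQBinom q θ 0 w := by
  have h := negQBinom_mul_one_add hq0 hθ 0 (w + 1)
  rw [zero_add] at h
  rw [h, negQBinom]
  simp only [zero_add, qBinom_self hq0 hq1, bb_succ, pow_add]
  ring

lemma negQBinom_succ_zero_mul (M : ℕ) :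
    negQBinom q θ (M + 1) 0 * (1 + θ * q ^ (M + 1)) = negQBinom q θ M 0 := by
  have h := negQBinom_mul_one_add hq0 hθ (M + 1) 0
  rw [add_zero] at h
  rw [h, negQBinom]
  simp [qBinom_zero_right hq0 hq1]

lemma negQBinom_succ_succ_mul (M w : ℕ) :
    negQBinom q θ (M + 1) (w + 1) * (1 + θ * q ^ (M + 1 + (w + 1))) =
      negQBinom q θ M (w + 1) + θ * q ^ (M + 1 + w) * negQBinom q θ (M + 1) w := by
  rw [negQBinom_mul_one_add hq0 hθ, negQBinom, negQBinom,
    show M + 1 + (w + 1) = M + w + 2 by omega, show M + (w + 1) = M + w + 1 by omega,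
    show M + 1 + w = M + w + 1 by omega, qBinom_pascal hq0 hq1, bb_succ, pow_add, pow_add]
  ring

lemma hasSum_negQBinom (M : ℕ) : HasSum (negQBinom q θ M) 1 := by
  have hr : ∀ M w, 0 ≤ θ * q ^ (M + w) := fun _ _ => by positivity
  have hr0 : ∀ M, Tendsto (fun w => θ * q ^ (M + w)) atTop (𝓝 0) := fun M => by
    simpa [pow_add, mul_assoc] using
      (tendsto_pow_atTop_nhds_zero_of_lt_one hq0.le hq1).const_mul (θ * q ^ M)
  induction M with
  | zero =>
    refine hasSum_of_mul_one_add_eq (negQBinom_nonneg hq0 hq1 hθ 0) (hr 0) (hr0 0)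
      (fun w => ?_) (hasSum_ite_eq 0 1) ?_ ?_
    · split_ifs <;> norm_num
    · simpa using negQBinom_zero_zero_mul hq0 hq1 hθ
    · simpa using negQBinom_zero_succ_mul hq0 hq1 hθ
  | succ M ih =>
    exact hasSum_of_mul_one_add_eq (negQBinom_nonneg hq0 hq1 hθ (M + 1)) (hr (M + 1)) (hr0 (M + 1))
      (negQBinom_nonneg hq0 hq1 hθ M) ih (negQBinom_succ_zero_mul hq0 hq1 hθ M)
      (negQBinom_succ_succ_mul hq0 hq1 hθ M)

end

lemma prod_Icc_one_succ_sub {M : Type*} [CommMonoid M] (f : ℤ → M) (u : ℤ) (m : ℕ) :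
    ∏ i ∈ Icc 1 (m + 1), f (u - i + 1) = f u * ∏ i ∈ Icc 1 m, f (u - 1 - i + 1) := by
  induction m with
  | zero => simp
  | succ m ih =>
    rw [prod_Icc_succ_top (by omega), ih, prod_Icc_succ_top (by omega), mul_assoc]
    congr 3
    push_cast
    ring

lemma qFall_succ (q : ℝ) (u : ℤ) (m : ℕ) : qFall q u (m + 1) = qInt q u * qFall q (u - 1) m :=
  prod_Icc_one_succ_sub _ u m

lemma qFallInv_succ (q : ℝ) (u : ℤ) (m : ℕ) :
    qFallInv q u (m + 1) = qIntInv q u * qFallInv q (u - 1) m :=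
  prod_Icc_one_succ_sub _ u m

lemma qFall_natCast_mul_qFact (q : ℝ) (a m : ℕ) :
    qFall q ((a + m : ℕ) : ℤ) m * qFact q a = qFact q (a + m) := by
  induction m with
  | zero => simp [qFall]
  | succ m ih =>
    rw [qFall_succ, show ((a + (m + 1) : ℕ) : ℤ) - 1 = ((a + m : ℕ) : ℤ) by push_cast; ring,
      mul_assoc, ih, ← add_assoc, qFact_succ, mul_comm]

lemma qFallInv_natCast_mul_pow {q : ℝ} (hq : q ≠ 0) (v m : ℕ) :
    qFallInv q ((v + m : ℕ) : ℤ) m * q ^ bb (v + m) =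
      qFall q ((v + m : ℕ) : ℤ) m * q ^ bb v := by
  induction m with
  | zero => simp [qFall, qFallInv]
  | succ m ih =>
    have hInv :
        qIntInv q ((v + m + 1 : ℕ) : ℤ) * q ^ (v + m) = qInt q ((v + m + 1 : ℕ) : ℤ) := by
      rw [qIntInv, show 1 - ((v + m + 1 : ℕ) : ℤ) = -((v + m : ℕ) : ℤ) by push_cast; ring,
        zpow_neg, zpow_natCast, mul_right_comm, inv_mul_cancel₀ (pow_ne_zero _ hq), one_mul]
    rw [← add_assoc, qFallInv_succ, qFall_succ,
      show ((v + m + 1 : ℕ) : ℤ) - 1 = ((v + m : ℕ) : ℤ) by push_cast; ring, bb_succ,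
      pow_add, ← hInv]
    linear_combination qIntInv q ((v + m + 1 : ℕ) : ℤ) * q ^ (v + m) * ih

lemma qFallInv_natCast_eq_zero (q : ℝ) {w m : ℕ} (h : w < m) : qFallInv q (w : ℤ) m = 0 := by
  refine prod_eq_zero (i := w + 1) (mem_Icc.2 ⟨by omega, h⟩) ?_
  simp [qIntInv, qInt]

lemma qFallInv_natCast_nonneg {q : ℝ} (hq0 : 0 < q) (hq1 : q < 1) (w m : ℕ) :
    0 ≤ qFallInv q (w : ℤ) m := by
  rcases lt_or_ge w m with h | h
  · rw [qFallInv_natCast_eq_zero q h]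
  · refine prod_nonneg fun i hi => mul_nonneg (zpow_pos hq0 _).le (qInt_pos hq0 hq1 ?_).le
    have := (mem_Icc.1 hi).2
    omega

lemma qFall_mul_qBinom {q : ℝ} (hq0 : 0 < q) (hq1 : q < 1) (M m v : ℕ) :
    qFall q ((v + m : ℕ) : ℤ) m * qBinom q (M + (v + m)) (v + m) =
      qFall q ((M + m : ℕ) : ℤ) m * qBinom q (M + m + v) v := by
  have hfact := fun n => (qFact_pos hq0 hq1 n).ne'
  have hFall : ∀ a, qFall q ((a + m : ℕ) : ℤ) m = qFact q (a + m) / qFact q a := fun a =>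
    eq_div_of_mul_eq (hfact a) (qFall_natCast_mul_qFact q a m)
  unfold qBinom
  rw [hFall, hFall, show M + (v + m) - (v + m) = M by omega, show M + m + v - v = M + m by omega,
    show M + m + v = M + (v + m) by omega]
  field_simp [hfact]

lemma qFallInv_mul_negQBinom_add {q θ : ℝ} (hq0 : 0 < q) (hq1 : q < 1) (M m v : ℕ) :
    qFallInv q ((v + m : ℕ) : ℤ) m * negQBinom q θ M (v + m) =
      θ ^ m * qFall q ((M + m : ℕ) : ℤ) m * negQBinom q θ (M + m) v := by
  unfold negQBinom
  rw [show M + m + v + 1 = M + (v + m) + 1 by omega, pow_add, div_eq_mul_inv, div_eq_mul_inv]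
  linear_combination (θ ^ v * θ ^ m * qBinom q (M + (v + m)) (v + m) *
      (oplus q θ (M + (v + m) + 1))⁻¹) * qFallInv_natCast_mul_pow hq0.ne' v m +
    (θ ^ v * θ ^ m * q ^ bb v * (oplus q θ (M + (v + m) + 1))⁻¹) *
      qFall_mul_qBinom hq0 hq1 M m v

lemma hasSum_qFallInv_mul_negQBinom {q θ : ℝ} (hq0 : 0 < q) (hq1 : q < 1) (hθ : 0 ≤ θ)
    (M m : ℕ) :
    HasSum (fun w : ℕ => qFallInv q (w : ℤ) m * negQBinom q θ M w)
      (θ ^ m * qFall q ((M + m : ℕ) : ℤ) m) := by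
  rw [← hasSum_nat_add_iff' m, sum_eq_zero fun w hw => by
    rw [qFallInv_natCast_eq_zero q (mem_range.1 hw), zero_mul], sub_zero]
  simpa only [mul_one] using ((hasSum_negQBinom hq0 hq1 hθ (M + m)).mul_left _).congr_fun
    (qFallInv_mul_negQBinom_add hq0 hq1 M m)

lemma gpmf_succ {q α₁ α₂ : ℝ} (hq0 : 0 < q) (hq1 : q < 1) (n w₁ w₂ : ℕ) :
    gpmf q α₁ α₂ (n + 1) w₁ w₂ =
      negQBinom q α₂ n w₂ * negQBinom q α₁ (n + w₂) w₁ := by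
  have := (qFact_pos hq0 hq1 (n + w₂)).ne'
  have htri : qFact q (n + w₂ + w₁) / (qFact q w₁ * qFact q w₂ * qFact q n) =
      qBinom q (n + w₂) w₂ * qBinom q (n + w₂ + w₁) w₁ := by
    unfold qBinom
    rw [show n + w₂ + w₁ - w₁ = n + w₂ by omega, show n + w₂ - w₂ = n by omega]
    field_simp
  unfold gpmf negQBinom
  rw [show n + 1 + w₁ + w₂ - 1 = n + w₂ + w₁ by omega, Nat.add_sub_cancel, htri,
    show n + 1 + w₁ + w₂ = n + w₂ + w₁ + 1 by omega, show n + 1 + w₂ = n + w₂ + 1 by omega,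
    pow_add]
  ring

lemma hasSum_prod_of_nonneg_of_fiberwise {β γ : Type*} {f : β × γ → ℝ} {g : β → ℝ} {a : ℝ}
    (hf : 0 ≤ f) (hfg : ∀ b, HasSum (fun c => f (b, c)) (g b)) (hg : HasSum g a) :
    HasSum f a := by
  have hs : Summable f := (summable_prod_of_nonneg hf).2
    ⟨fun b => (hfg b).summable, hg.summable.congr fun b => ((hfg b).tsum_eq).symm⟩
  have h := hs.hasSum
  rwa [(h.prod_fiberwise hfg).unique hg] at h

theorem stmt6_general (q : ℝ) (hq0 : 0 < q) (hq1 : q < 1) (n : ℕ) (hn : 1 ≤ n) (α1 α2 : ℝ)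
    (hα1 : 0 < α1) (hα2 : 0 < α2) (m2 : ℕ) :
    HasSum (fun w : ℕ × ℕ =>
        qFallInv q (w.2 : ℤ) m2 * gpmf q α1 α2 n w.1 w.2)
      (α2 ^ m2 * qFall q ((n : ℤ) + (m2 : ℤ) - 1) m2) := by
  obtain ⟨k, rfl⟩ : ∃ k, n = k + 1 := ⟨n - 1, by omega⟩
  rw [show ((k + 1 : ℕ) : ℤ) + m2 - 1 = ((k + m2 : ℕ) : ℤ) by push_cast; ring,
    ← (Equiv.prodComm ℕ ℕ).hasSum_iff]
  refine hasSum_prod_of_nonneg_of_fiberwise (fun w => ?_) (fun w₂ => ?_)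
    (hasSum_qFallInv_mul_negQBinom hq0 hq1 hα2.le k m2)
  · simp only [Function.comp_apply, Equiv.prodComm_apply, Prod.fst_swap, Prod.snd_swap,
      gpmf_succ hq0 hq1]
    exact mul_nonneg (qFallInv_natCast_nonneg hq0 hq1 _ _)
      (mul_nonneg (negQBinom_nonneg hq0 hq1 hα2.le _ _) (negQBinom_nonneg hq0 hq1 hα1.le _ _))
  · simpa only [Function.comp_apply, Equiv.prodComm_apply, Prod.swap_prod_mk, gpmf_succ hq0 hq1,
      mul_assoc, mul_one] using (hasSum_negQBinom hq0 hq1 hα1.le (k + w₂)).mul_left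
        (qFallInv q (w₂ : ℤ) m2 * negQBinom q α2 k w₂)

theorem stmt6 (q : ℝ) (hq0 : 0 < q) (hq1 : q < 1) (n : ℕ) (hn : 1 ≤ n) (α1 α2 : ℝ)
    (hα1 : 0 < α1) (hα1' : α1 < 1) (hα2 : 0 < α2) (hα2' : α2 < 1) (m2 : ℕ) :
    HasSum (fun w : ℕ × ℕ =>
        qFallInv q (w.2 : ℤ) m2 * gpmf q α1 α2 n w.1 w.2)
      (α2 ^ m2 * qFall q ((n : ℤ) + (m2 : ℤ) - 1) m2) :=
  stmt6_general q hq0 hq1 n hn α1 α2 hα1 hα2 m2
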